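/- Let h satisfy conditions (I) and (II). Then Σ_{l≤L} c₂(l) = C L^{β₁}(1 + O(L^{−δ})) for all L ≥ 1, and Σ_{m≤M} c₁(m) = C M^{β₂}(1 + O(M^{−δ})) for all M ≥ 1. -/

import Mathlib

open scoped BigOperators Pointwise
open MeasureTheory Filter Asymptotics

noncomputable section

namespace BiprojCM

/-- `e(t) = exp(2πit)`. -/
def eAdd (t : ℝ) : ℂ := Complex.exp (2 * Real.pi * Complex.I * t)

/-- Sup-norm `max_i |x_i|` of an integer vector, as a real number. -/
def mnorm {n : ℕ} (x : Fin n → ℤ) : ℝ := ‖fun i => (x i : ℝ)‖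

open Classical in
/-- Dimension of a subset of the affine space `σ → ℂ`: the Krull dimension of its
coordinate ring (the empty set having dimension `-1`). -/
def affDim {σ : Type} (S : Set (σ → ℂ)) : ℤ :=
  if S = ∅ then -1
  else (ENat.toNat (WithBot.unbotD 0 (ringKrullDim (MvPolynomial σ ℂ ⧸ MvPolynomial.vanishingIdeal ℂ S))) : ℤ)

variable {n₁ n₂ R : ℕ}

/-- Evaluation of an integral polynomial in the variables `(x; y)` at integer points. -/
def evalZ (F : MvPolynomial (Fin n₁ ⊕ Fin n₂) ℤ) (x : Fin n₁ → ℤ) (y : Fin n₂ → ℤ) : ℤ :=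
  MvPolynomial.eval (Sum.elim x y) F

/-- Evaluation at real points. -/
def evalR (F : MvPolynomial (Fin n₁ ⊕ Fin n₂) ℤ) (v : Fin n₁ → ℝ) (w : Fin n₂ → ℝ) : ℝ :=
  MvPolynomial.eval₂ (Int.castRingHom ℝ) (Sum.elim v w) F

/-- Evaluation at complex points. -/
def evalC (F : MvPolynomial (Fin n₁ ⊕ Fin n₂) ℤ) (x : Fin n₁ → ℂ) (y : Fin n₂ → ℂ) : ℂ :=
  MvPolynomial.eval₂ (Int.castRingHom ℂ) (Sum.elim x y) F

/-- `F` is bihomogeneous of bidegree `(d₁, d₂)`. -/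
def Bihomog (d₁ d₂ : ℕ) (F : MvPolynomial (Fin n₁ ⊕ Fin n₂) ℤ) : Prop :=
  ∀ (a b : ℂ) (x : Fin n₁ → ℂ) (y : Fin n₂ → ℂ),
    evalC F (fun i => a * x i) (fun j => b * y j) = a ^ d₁ * b ^ d₂ * evalC F x y

/-- The Jacobian matrix `(∂F_i/∂x_j)_{i,j}` evaluated at a complex point. -/
def jacX (F : Fin R → MvPolynomial (Fin n₁ ⊕ Fin n₂) ℤ) (x : Fin n₁ → ℂ) (y : Fin n₂ → ℂ) :
    Matrix (Fin R) (Fin n₁) ℂ :=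
  Matrix.of fun i j => evalC (MvPolynomial.pderiv (Sum.inl j) (F i)) x y

/-- The Jacobian matrix `(∂F_i/∂y_j)_{i,j}` evaluated at a complex point. -/
def jacY (F : Fin R → MvPolynomial (Fin n₁ ⊕ Fin n₂) ℤ) (x : Fin n₁ → ℂ) (y : Fin n₂ → ℂ) :
    Matrix (Fin R) (Fin n₂) ℂ :=
  Matrix.of fun i j => evalC (MvPolynomial.pderiv (Sum.inr j) (F i)) x y

/-- The affine variety `V₁* ⊆ 𝔸_ℂ^{n₁+n₂}` given by `rank (∂F_i/∂x_j) < R`. -/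
def V1star (F : Fin R → MvPolynomial (Fin n₁ ⊕ Fin n₂) ℤ) : Set (Fin n₁ ⊕ Fin n₂ → ℂ) :=
  {p | (jacX F (fun i => p (Sum.inl i)) (fun j => p (Sum.inr j))).rank < R}

/-- The affine variety `V₂* ⊆ 𝔸_ℂ^{n₁+n₂}` given by `rank (∂F_i/∂y_j) < R`. -/
def V2star (F : Fin R → MvPolynomial (Fin n₁ ⊕ Fin n₂) ℤ) : Set (Fin n₁ ⊕ Fin n₂ → ℂ) :=
  {p | (jacY F (fun i => p (Sum.inl i)) (fun j => p (Sum.inr j))).rank < R}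

/-- For fixed `y`, the variety `V₁,y* ⊆ 𝔸_ℂ^{n₁}`. -/
def V1y (F : Fin R → MvPolynomial (Fin n₁ ⊕ Fin n₂) ℤ) (y : Fin n₂ → ℂ) :
    Set (Fin n₁ → ℂ) :=
  {x | (jacX F x y).rank < R}

/-- For fixed `x`, the variety `V₂,x* ⊆ 𝔸_ℂ^{n₂}`. -/
def V2x (F : Fin R → MvPolynomial (Fin n₁ ⊕ Fin n₂) ℤ) (x : Fin n₁ → ℂ) :
    Set (Fin n₂ → ℂ) :=
  {y | (jacY F x y).rank < R}

/-- `𝒜₁(ℤ) = {y ∈ ℤ^{n₂} : dim V₁,y* < dim V₁* − n₂ + λ}`. -/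
def A1Z (F : Fin R → MvPolynomial (Fin n₁ ⊕ Fin n₂) ℤ) (lam : ℕ) : Set (Fin n₂ → ℤ) :=
  {y | affDim (V1y F fun j => (y j : ℂ)) < affDim (V1star F) - n₂ + lam}

/-- `𝒜₂(ℤ) = {x ∈ ℤ^{n₁} : dim V₂,x* < dim V₂* − n₁ + λ₂}`. -/
def A2Z (F : Fin R → MvPolynomial (Fin n₁ ⊕ Fin n₂) ℤ) (lam : ℕ) : Set (Fin n₁ → ℤ) :=
  {x | affDim (V2x F fun i => (x i : ℂ)) < affDim (V2star F) - n₁ + lam}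

/-- A box in `ℝ^n`: a product of bounded intervals. -/
def IsBox {n : ℕ} (B : Set (Fin n → ℝ)) : Prop :=
  ∃ a b : Fin n → ℝ, B = {v | ∀ i, v i ∈ Set.Icc (a i) (b i)}

/-- Integer points of the dilated box `P • B`. -/
def intBox {n : ℕ} (B : Set (Fin n → ℝ)) (P : ℝ) : Set (Fin n → ℤ) :=
  {x | (fun i => (x i : ℝ)) ∈ P • B}

/-- `N_y(P₁)`: the number of integer points `x ∈ P₁ℬ₁` with `F_i(x; y) = 0` for all `i`. -/
def Ny (F : Fin R → MvPolynomial (Fin n₁ ⊕ Fin n₂) ℤ) (B₁ : Set (Fin n₁ → ℝ))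
    (y : Fin n₂ → ℤ) (P₁ : ℝ) : ℕ :=
  Set.ncard {x : Fin n₁ → ℤ | x ∈ intBox B₁ P₁ ∧ ∀ i, evalZ (F i) x y = 0}

/-- `N₁(P₁, P₂) = Σ_{y ∈ P₂ℬ₂ ∩ 𝒜₁(ℤ)} N_y(P₁)` as a count of pairs. -/
def N1 (F : Fin R → MvPolynomial (Fin n₁ ⊕ Fin n₂) ℤ) (B₁ : Set (Fin n₁ → ℝ))
    (B₂ : Set (Fin n₂ → ℝ)) (lam : ℕ) (P₁ P₂ : ℝ) : ℕ :=
  Set.ncard {p : (Fin n₁ → ℤ) × (Fin n₂ → ℤ) |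
    p.1 ∈ intBox B₁ P₁ ∧ p.2 ∈ intBox B₂ P₂ ∧ p.2 ∈ A1Z F lam ∧
    ∀ i, evalZ (F i) p.1 p.2 = 0}

/-- `N₂(P₁, P₂)`, with the roles of `x` and `y` interchanged. -/
def N2 (F : Fin R → MvPolynomial (Fin n₁ ⊕ Fin n₂) ℤ) (B₁ : Set (Fin n₁ → ℝ))
    (B₂ : Set (Fin n₂ → ℝ)) (lam₂ : ℕ) (P₁ P₂ : ℝ) : ℕ :=
  Set.ncard {p : (Fin n₁ → ℤ) × (Fin n₂ → ℤ) |
    p.1 ∈ intBox B₁ P₁ ∧ p.2 ∈ intBox B₂ P₂ ∧ p.1 ∈ A2Z F lam₂ ∧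
    ∀ i, evalZ (F i) p.1 p.2 = 0}

/-- `N_U(P₁, P₂)`: integer points of `U = U₁ × U₂` in the dilated boxes solving the system. -/
def NU (F : Fin R → MvPolynomial (Fin n₁ ⊕ Fin n₂) ℤ) (B₁ : Set (Fin n₁ → ℝ))
    (B₂ : Set (Fin n₂ → ℝ)) (lam₁ lam₂ : ℕ) (P₁ P₂ : ℝ) : ℕ :=
  Set.ncard {p : (Fin n₁ → ℤ) × (Fin n₂ → ℤ) |
    p.1 ∈ intBox B₁ P₁ ∧ p.2 ∈ intBox B₂ P₂ ∧
    p.1 ∈ A2Z F lam₂ ∧ p.2 ∈ A1Z F lam₁ ∧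
    ∀ i, evalZ (F i) p.1 p.2 = 0}

/-- The exponential sum `S_y(α) = Σ_{x ∈ P₁ℬ₁ ∩ ℤ^{n₁}} e(Σ_i α_i F_i(x; y))`. -/
def Sexp (F : Fin R → MvPolynomial (Fin n₁ ⊕ Fin n₂) ℤ) (B₁ : Set (Fin n₁ → ℝ))
    (P₁ : ℝ) (y : Fin n₂ → ℤ) (α : Fin R → ℝ) : ℂ :=
  ∑' x : ↥(intBox B₁ P₁), eAdd (∑ i, α i * (evalZ (F i) (x : Fin n₁ → ℤ) y : ℝ))

/-- The complete exponential sum `S_{a,q}(y) = Σ_{z mod q} e(Σ_i (a_i/q) F_i(z; y))`. -/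
def Saq (F : Fin R → MvPolynomial (Fin n₁ ⊕ Fin n₂) ℤ) (q : ℕ) (a : Fin R → ℤ)
    (y : Fin n₂ → ℤ) : ℂ :=
  ∑ z : Fin n₁ → Fin q,
    eAdd (∑ i, (a i : ℝ) / q * (evalZ (F i) (fun j => ((z j : ℕ) : ℤ)) y : ℝ))

/-- The `q`-th term of the singular series `𝔖_y`. -/
def SStermY (F : Fin R → MvPolynomial (Fin n₁ ⊕ Fin n₂) ℤ) (y : Fin n₂ → ℤ) (q : ℕ) : ℂ :=
  ((q : ℂ) ^ n₁)⁻¹ * ∑ a : Fin R → Fin q,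
    if Nat.gcd q (Finset.univ.gcd fun i => (a i : ℕ)) = 1
    then Saq F q (fun i => ((a i : ℕ) : ℤ)) y else 0

/-- The singular series `𝔖_y`. -/
def SSy (F : Fin R → MvPolynomial (Fin n₁ ⊕ Fin n₂) ℤ) (y : Fin n₂ → ℤ) : ℂ :=
  ∑' q : ℕ, SStermY F y q

/-- The truncated singular series `𝔖_y(t) = Σ_{q ≤ t} q^{-n₁} Σ_a S_{a,q}(y)`. -/
def SSyT (F : Fin R → MvPolynomial (Fin n₁ ⊕ Fin n₂) ℤ) (y : Fin n₂ → ℤ) (t : ℝ) : ℂ :=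
  ∑ q ∈ Finset.Icc 1 ⌊t⌋₊, SStermY F y q

/-- The integral `I_y(β) = ∫_{v ∈ ℬ₁} e(Σ_i β_i F_i(v; y)) dv`. -/
def Iy (F : Fin R → MvPolynomial (Fin n₁ ⊕ Fin n₂) ℤ) (B₁ : Set (Fin n₁ → ℝ))
    (y : Fin n₂ → ℤ) (β : Fin R → ℝ) : ℂ :=
  ∫ v in B₁, eAdd (∑ i, β i * evalR (F i) v (fun j => (y j : ℝ)))

/-- The singular integral `J_y = ∫_{ℝ^R} I_y(β) dβ`. -/
def Jy (F : Fin R → MvPolynomial (Fin n₁ ⊕ Fin n₂) ℤ) (B₁ : Set (Fin n₁ → ℝ))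
    (y : Fin n₂ → ℤ) : ℂ :=
  ∫ β : Fin R → ℝ, Iy F B₁ y β

/-- The truncated singular integral `J_y(t) = ∫_{|β| ≤ t} I_y(β) dβ`. -/
def JyT (F : Fin R → MvPolynomial (Fin n₁ ⊕ Fin n₂) ℤ) (B₁ : Set (Fin n₁ → ℝ))
    (y : Fin n₂ → ℤ) (t : ℝ) : ℂ :=
  ∫ β in {β : Fin R → ℝ | ∀ i, |β i| ≤ t}, Iy F B₁ y β

/-- The symmetric complete exponential sum `S_{a,q}(x)`. -/
def SaqX (F : Fin R → MvPolynomial (Fin n₁ ⊕ Fin n₂) ℤ) (q : ℕ) (a : Fin R → ℤ)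
    (x : Fin n₁ → ℤ) : ℂ :=
  ∑ z : Fin n₂ → Fin q,
    eAdd (∑ i, (a i : ℝ) / q * (evalZ (F i) x (fun j => ((z j : ℕ) : ℤ)) : ℝ))

/-- The `q`-th term of the singular series `𝔖_x`. -/
def SStermX (F : Fin R → MvPolynomial (Fin n₁ ⊕ Fin n₂) ℤ) (x : Fin n₁ → ℤ) (q : ℕ) : ℂ :=
  ((q : ℂ) ^ n₂)⁻¹ * ∑ a : Fin R → Fin q,
    if Nat.gcd q (Finset.univ.gcd fun i => (a i : ℕ)) = 1
    then SaqX F q (fun i => ((a i : ℕ) : ℤ)) x else 0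

/-- The singular series `𝔖_x`. -/
def SSx (F : Fin R → MvPolynomial (Fin n₁ ⊕ Fin n₂) ℤ) (x : Fin n₁ → ℤ) : ℂ :=
  ∑' q : ℕ, SStermX F x q

/-- The integral `I_x(β) = ∫_{w ∈ ℬ₂} e(Σ_i β_i F_i(x; w)) dw`. -/
def Ix (F : Fin R → MvPolynomial (Fin n₁ ⊕ Fin n₂) ℤ) (B₂ : Set (Fin n₂ → ℝ))
    (x : Fin n₁ → ℤ) (β : Fin R → ℝ) : ℂ :=
  ∫ w in B₂, eAdd (∑ i, β i * evalR (F i) (fun i' => (x i' : ℝ)) w)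

/-- The singular integral `J_x = ∫_{ℝ^R} I_x(β) dβ`. -/
def Jx (F : Fin R → MvPolynomial (Fin n₁ ⊕ Fin n₂) ℤ) (B₂ : Set (Fin n₂ → ℝ))
    (x : Fin n₁ → ℤ) : ℂ :=
  ∫ β : Fin R → ℝ, Ix F B₂ x β

/-- The complete exponential sum of the whole system in all `n₁ + n₂` variables. -/
def SaqAll (F : Fin R → MvPolynomial (Fin n₁ ⊕ Fin n₂) ℤ) (q : ℕ) (a : Fin R → ℤ) : ℂ :=
  ∑ z : (Fin n₁ ⊕ Fin n₂) → Fin q,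
    eAdd (∑ i, (a i : ℝ) / q * (MvPolynomial.eval (fun j => ((z j : ℕ) : ℤ)) (F i) : ℝ))

/-- The `q`-th term of the singular series of the whole system. -/
def SStermAll (F : Fin R → MvPolynomial (Fin n₁ ⊕ Fin n₂) ℤ) (q : ℕ) : ℂ :=
  ((q : ℂ) ^ (n₁ + n₂))⁻¹ * ∑ a : Fin R → Fin q,
    if Nat.gcd q (Finset.univ.gcd fun i => (a i : ℕ)) = 1
    then SaqAll F q (fun i => ((a i : ℕ) : ℤ)) else 0

/-- The singular series `𝔖` of the system. -/
def SSall (F : Fin R → MvPolynomial (Fin n₁ ⊕ Fin n₂) ℤ) : ℂ :=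
  ∑' q : ℕ, SStermAll F q

/-- The singular integral `J` of the system, taken with respect to the box
`[-1,1]^{n₁+n₂}`. -/
def SIall (F : Fin R → MvPolynomial (Fin n₁ ⊕ Fin n₂) ℤ) : ℂ :=
  ∫ β : Fin R → ℝ,
    ∫ v in {v : Fin n₁ ⊕ Fin n₂ → ℝ | ∀ j, v j ∈ Set.Icc (-1 : ℝ) 1},
      eAdd (∑ i, β i * MvPolynomial.eval₂ (Int.castRingHom ℝ) v (F i))

/-- `σ`: the product of the circle-method singular series and singular integral. -/
def sigmaC (F : Fin R → MvPolynomial (Fin n₁ ⊕ Fin n₂) ℤ) : ℂ := SSall F * SIall F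

/-- The quantity `g₁(u, δ)`. -/
def g1 (R d₁ d₂ : ℕ) (u δ : ℝ) : ℝ :=
  (1 - u * d₂ * (2 * (R : ℝ) ^ 2 + 3 * R) - δ)⁻¹ *
    ((2 * (R : ℝ) + 3) * R * ((d₁ : ℝ) - 1)) * (u * d₂ * R * (2 * (R : ℝ) + 1) + 2 * δ)

/-- The quantity `g₂(u, δ)`. -/
def g2 (R d₁ d₂ : ℕ) (u δ : ℝ) : ℝ :=
  (u - (d₁ : ℝ) * (2 * (R : ℝ) ^ 2 + 3 * R) - u * δ)⁻¹ *
    ((2 * (R : ℝ) + 3) * R * ((d₂ : ℝ) - 1)) * ((d₁ : ℝ) * R * (2 * (R : ℝ) + 1) + 2 * u * δ)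

/-- The defining equation for `b₁`. -/
def b1Eq (R d₁ d₂ : ℕ) (δ b₁ : ℝ) : Prop :=
  (2 : ℝ) ^ (d₁ + d₂ - 2) * R * (b₁ * d₁ + d₂) =
    (2 : ℝ) ^ (d₁ - 1) * (g1 R d₁ d₂ (1 / b₁) δ + R * ((R : ℝ) + 1) * ((d₁ : ℝ) - 1)) +
      (⌈(R : ℝ) * (b₁ * d₁ + d₂) + δ⌉ : ℤ)

/-- The defining equation for `b₂`. -/
def b2Eq (R d₁ d₂ : ℕ) (δ b₂ : ℝ) : Prop :=
  (2 : ℝ) ^ (d₁ + d₂ - 2) * R * (b₂ * d₂ + d₁) =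
    (2 : ℝ) ^ (d₂ - 1) * (g2 R d₁ d₂ b₂ δ + R * ((R : ℝ) + 1) * ((d₂ : ℝ) - 1)) +
      (⌈(R : ℝ) * (b₂ * d₂ + d₁) + δ⌉ : ℤ)

/-- The conclusion of the Weyl-type lemma (Lemma 5.3 of the paper), for a constant `C₃`. -/
def WeylProp (F : Fin R → MvPolynomial (Fin n₁ ⊕ Fin n₂) ℤ) (B₁ : Set (Fin n₁ → ℝ))
    (d₁ d₂ : ℕ) (lam : ℕ) (K₁ ε C₃ : ℝ) : Prop :=
  ∀ θ : ℝ, 0 < θ → θ ≤ 1 → ∀ P₁ : ℝ, 1 ≤ P₁ → C₃ < P₁ ^ θ →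
    ∀ y ∈ A1Z F lam, ∀ α : Fin R → ℝ,
      ‖Sexp F B₁ P₁ y α‖ < P₁ ^ ((n₁ : ℝ) - K₁ * θ + ε) ∨
      ∃ q : ℕ, 1 ≤ q ∧
        (q : ℝ) ≤ P₁ ^ ((R : ℝ) * θ * ((d₁ : ℝ) - 1)) * mnorm y ^ (R * d₂) ∧
        ∃ a : Fin R → ℤ,
          Nat.gcd q (Finset.univ.gcd fun i => (a i).natAbs) = 1 ∧
          ∀ i, 2 * |(q : ℝ) * α i - (a i : ℝ)| ≤
            P₁ ^ (-(d₁ : ℝ) + (R : ℝ) * θ * ((d₁ : ℝ) - 1)) * mnorm y ^ ((R - 1) * d₂)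

/-- The (enlarged) major arc `𝔐'^y_{a,q}(θ)`. -/
def majorArc' (d₁ d₂ : ℕ) (P₁ θ : ℝ) (y : Fin n₂ → ℤ) (q : ℕ) (a : Fin R → ℤ) :
    Set (Fin R → ℝ) :=
  {α | (∀ i, α i ∈ Set.Icc (0 : ℝ) 1) ∧
    ∀ i, 2 * |(q : ℝ) * α i - (a i : ℝ)| ≤
      (q : ℝ) * P₁ ^ (-(d₁ : ℝ) + (R : ℝ) * θ * ((d₁ : ℝ) - 1)) * mnorm y ^ ((R - 1) * d₂)}


/-- Condition (I) for an arithmetical function `h`. -/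
def CondI (h : ℕ → ℕ → ℝ) (C δ β₁ β₂ : ℝ) : Prop :=
  ∃ K > (0 : ℝ), ∀ L M : ℝ, 1 ≤ L → 1 ≤ M →
    |(∑ l ∈ Finset.Icc 1 ⌊L⌋₊, ∑ m ∈ Finset.Icc 1 ⌊M⌋₊, h l m) - C * L ^ β₁ * M ^ β₂| ≤
      K * L ^ β₁ * M ^ β₂ * (min L M) ^ (-δ)

/-- Condition (II) for an arithmetical function `h`, with given `c₁`, `c₂`. -/
def CondII (h : ℕ → ℕ → ℝ) (δ β₁ β₂ ν D : ℝ) (c₁ c₂ : ℕ → ℝ) : Prop :=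
  (∃ K > (0 : ℝ), ∀ (L : ℝ) (m : ℕ), 1 ≤ L → 1 ≤ m → (m : ℝ) ≤ L ^ ν →
    |(∑ l ∈ Finset.Icc 1 ⌊L⌋₊, h l m) - c₁ m * L ^ β₁| ≤ K * (m : ℝ) ^ D * L ^ (β₁ - δ)) ∧
  (∃ K > (0 : ℝ), ∀ (M : ℝ) (l : ℕ), 1 ≤ M → 1 ≤ l → (l : ℝ) ≤ M ^ ν →
    |(∑ m ∈ Finset.Icc 1 ⌊M⌋₊, h l m) - c₂ l * M ^ β₂| ≤ K * (l : ℝ) ^ D * M ^ (β₂ - δ))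

open Classical in
/-- `Υ_h(P) = Σ_{l^{β₁} m^{β₂} ≤ P} h(l, m)`, the sum over pairs of positive integers. -/
def Upsilon (h : ℕ → ℕ → ℝ) (β₁ β₂ : ℝ) (P : ℝ) : ℝ :=
  ∑' p : ℕ × ℕ,
    if 1 ≤ p.1 ∧ 1 ≤ p.2 ∧ (p.1 : ℝ) ^ β₁ * (p.2 : ℝ) ^ β₂ ≤ P then h p.1 p.2 else 0

open Classical in
/-- `T₁ = Σ_{l ≤ P^μ} Σ_{P^{1/2} < m^{β₂} ≤ P l^{−β₁}} h(l, m)`. -/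
def T1 (h : ℕ → ℕ → ℝ) (β₁ β₂ μ : ℝ) (P : ℝ) : ℝ :=
  ∑ l ∈ Finset.Icc 1 ⌊P ^ μ⌋₊, ∑' m : ℕ,
    if P ^ ((1 : ℝ) / 2) < (m : ℝ) ^ β₂ ∧ (m : ℝ) ^ β₂ ≤ P * (l : ℝ) ^ (-β₁)
    then h l m else 0

open Classical in
/-- `T₂ = Σ_{P^μ < l ≤ P^{1/(2β₁)}} Σ_{P^{1/2} < m^{β₂} ≤ P l^{−β₁}} h(l, m)`. -/
def T2 (h : ℕ → ℕ → ℝ) (β₁ β₂ μ : ℝ) (P : ℝ) : ℝ :=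
  ∑ l ∈ Finset.Ioc ⌊P ^ μ⌋₊ ⌊P ^ (1 / (2 * β₁))⌋₊, ∑' m : ℕ,
    if P ^ ((1 : ℝ) / 2) < (m : ℝ) ^ β₂ ∧ (m : ℝ) ^ β₂ ≤ P * (l : ℝ) ^ (-β₁)
    then h l m else 0

variable {n₁ n₂ : ℕ}

/-- A primitive integer vector. -/
def primitive {n : ℕ} (x : Fin n → ℤ) : Prop :=
  Finset.univ.gcd (fun i => (x i).natAbs) = 1

/- ℂ-coefficient versions -/
/-- Evaluation of a complex polynomial in the variables `(x; y)`. -/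
def evalCC (F : MvPolynomial (Fin n₁ ⊕ Fin n₂) ℂ) (x : Fin n₁ → ℂ) (y : Fin n₂ → ℂ) : ℂ :=
  MvPolynomial.eval (Sum.elim x y) F

/-- `F ∈ ℂ[x; y]` is bihomogeneous of bidegree `(d₁, d₂)`. -/
def BihomogC (d₁ d₂ : ℕ) (F : MvPolynomial (Fin n₁ ⊕ Fin n₂) ℂ) : Prop :=
  ∀ (a b : ℂ) (x : Fin n₁ → ℂ) (y : Fin n₂ → ℂ),
    evalCC F (fun i => a * x i) (fun j => b * y j) = a ^ d₁ * b ^ d₂ * evalCC F x y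

/-- The locus `V₁* ⊆ 𝔸_ℂ^{n₁+n₂}` where all `∂F/∂x_j` vanish (case `R = 1`). -/
def V1starC (F : MvPolynomial (Fin n₁ ⊕ Fin n₂) ℂ) : Set (Fin n₁ ⊕ Fin n₂ → ℂ) :=
  {p | ∀ j : Fin n₁, MvPolynomial.eval p (MvPolynomial.pderiv (Sum.inl j) F) = 0}

/-- The locus `V₂* ⊆ 𝔸_ℂ^{n₁+n₂}` where all `∂F/∂y_j` vanish (case `R = 1`). -/
def V2starC (F : MvPolynomial (Fin n₁ ⊕ Fin n₂) ℂ) : Set (Fin n₁ ⊕ Fin n₂ → ℂ) :=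
  {p | ∀ j : Fin n₂, MvPolynomial.eval p (MvPolynomial.pderiv (Sum.inr j) F) = 0}

/-- Smoothness of the biprojective hypersurface `F = 0`: there is no point with
`x ≠ 0` and `y ≠ 0` on the hypersurface where the full complex gradient vanishes. -/
def SmoothXC (F : MvPolynomial (Fin n₁ ⊕ Fin n₂) ℂ) : Prop :=
  ¬ ∃ p : Fin n₁ ⊕ Fin n₂ → ℂ,
      (fun i => p (Sum.inl i)) ≠ 0 ∧ (fun j => p (Sum.inr j)) ≠ 0 ∧
      MvPolynomial.eval p F = 0 ∧
      ∀ j : Fin n₁ ⊕ Fin n₂, MvPolynomial.eval p (MvPolynomial.pderiv j F) = 0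

/-! Multiply the row sums of condition (II) by `M ^ β₂` and sum over `l ≤ L`: the result is
the double sum of condition (I) up to `O(L ^ (1 + D) M ^ (β₂ - δ))`. Dividing by `M ^ β₂` gives
`∑_{l ≤ L} c₂ l = C L ^ β₁ + O(L ^ (β₁ - δ)) + O(L ^ (1 + D) M ^ (-δ))` for every
`M ≥ max L (L ^ (1 / ν))` (so that every `l ≤ L` is admissible in (II)), and letting
`M → ∞` removes the last term. The statement for `c₁` is the same one for the transpose
of `h`. -/

theorem CondI.swap {h : ℕ → ℕ → ℝ} {C δ β₁ β₂ : ℝ} (hI : CondI h C δ β₁ β₂) :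
    CondI (fun m l => h l m) C δ β₂ β₁ := by
  obtain ⟨K, hK, H⟩ := hI
  refine ⟨K, hK, fun M L hM hL => ?_⟩
  rw [Finset.sum_comm, min_comm, mul_right_comm C, mul_right_comm K]
  exact H L M hL hM

theorem CondII.swap {h : ℕ → ℕ → ℝ} {δ β₁ β₂ ν D : ℝ} {c₁ c₂ : ℕ → ℝ}
    (hII : CondII h δ β₁ β₂ ν D c₁ c₂) : CondII (fun m l => h l m) δ β₂ β₁ ν D c₂ c₁ :=
  hII.symm

theorem le_of_forall_ge_le_add_rpow_neg {a b c δ N : ℝ} (hδ : 0 < δ)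
    (H : ∀ M ≥ N, a ≤ b + c * M ^ (-δ)) : a ≤ b := by
  have hlim : Tendsto (fun M : ℝ => b + c * M ^ (-δ)) atTop (nhds b) := by
    simpa using ((tendsto_rpow_neg_atTop hδ).const_mul c).const_add b
  exact ge_of_tendsto hlim ((eventually_ge_atTop N).mono H)

theorem abs_sum_Icc_floor_sub_le {f g : ℕ → ℝ} {K D X L : ℝ} (hK : 0 ≤ K) (hD : 0 ≤ D)
    (hX : 0 ≤ X) (hL : 0 ≤ L)
    (H : ∀ l ∈ Finset.Icc 1 ⌊L⌋₊, |f l - g l| ≤ K * (l : ℝ) ^ D * X) :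
    |∑ l ∈ Finset.Icc 1 ⌊L⌋₊, f l - ∑ l ∈ Finset.Icc 1 ⌊L⌋₊, g l| ≤ K * L ^ (1 + D) * X := by
  rw [← Finset.sum_sub_distrib]
  calc _ ≤ ∑ l ∈ Finset.Icc 1 ⌊L⌋₊, |f l - g l| := Finset.abs_sum_le_sum_abs _ _
    _ ≤ ∑ _l ∈ Finset.Icc 1 ⌊L⌋₊, K * L ^ D * X := by
      refine Finset.sum_le_sum fun l hl => (H l hl).trans ?_
      gcongr
      exact (Nat.cast_le.2 (Finset.mem_Icc.1 hl).2).trans (Nat.floor_le hL)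
    _ = ⌊L⌋₊ * (K * L ^ D * X) := by simp
    _ ≤ L * (K * L ^ D * X) := by gcongr; exact Nat.floor_le hL
    _ = K * L ^ (1 + D) * X := by
      rw [Real.rpow_add' hL (by positivity), Real.rpow_one]; ring

theorem CondII.abs_sum_coeff₂_sub_le {h : ℕ → ℕ → ℝ} {C δ β₁ β₂ ν D : ℝ} {c₁ c₂ : ℕ → ℝ}
    (hδ : 0 < δ) (hν : 0 < ν) (hD : 0 ≤ D)
    (hI : CondI h C δ β₁ β₂) (hII : CondII h δ β₁ β₂ ν D c₁ c₂) :
    ∃ K > (0 : ℝ), ∀ L : ℝ, 1 ≤ L →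
      |(∑ l ∈ Finset.Icc 1 ⌊L⌋₊, c₂ l) - C * L ^ β₁| ≤ K * L ^ β₁ * L ^ (-δ) := by
  obtain ⟨K₁, hK₁, H₁⟩ := hI
  obtain ⟨K₂, hK₂, H₂⟩ := hII.2
  refine ⟨K₁, hK₁, fun L hL => ?_⟩
  have hL0 : 0 < L := by linarith
  refine le_of_forall_ge_le_add_rpow_neg hδ (N := max L (L ^ ν⁻¹)) (c := K₂ * L ^ (1 + D))
    fun M hM => ?_
  have hLM : L ≤ M := (le_max_left _ _).trans hM
  have hM1 : 1 ≤ M := hL.trans hLM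
  have hLν : L ≤ M ^ ν :=
    (Real.rpow_inv_le_iff_of_pos hL0.le (by linarith) hν).1 ((le_max_right _ _).trans hM)
  have hMβ : 0 < M ^ β₂ := by positivity
  set S := ∑ l ∈ Finset.Icc 1 ⌊L⌋₊, c₂ l
  set T := ∑ l ∈ Finset.Icc 1 ⌊L⌋₊, ∑ m ∈ Finset.Icc 1 ⌊M⌋₊, h l m
  have hrows : |S * M ^ β₂ - T| ≤ K₂ * L ^ (1 + D) * M ^ (β₂ - δ) := by
    rw [Finset.sum_mul]
    refine abs_sum_Icc_floor_sub_le hK₂.le hD (by positivity) hL0.le fun l hl => ?_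
    obtain ⟨hl1, hlL⟩ := Finset.mem_Icc.1 hl
    rw [abs_sub_comm]
    exact H₂ M l hM1 hl1 (((Nat.cast_le.2 hlL).trans (Nat.floor_le hL0.le)).trans hLν)
  have hdouble : |T - C * L ^ β₁ * M ^ β₂| ≤ K₁ * L ^ β₁ * M ^ β₂ * L ^ (-δ) := by
    simpa only [min_eq_left hLM] using H₁ L M hL hM1
  rw [← mul_le_mul_iff_left₀ hMβ]
  calc |S - C * L ^ β₁| * M ^ β₂ = |S * M ^ β₂ - C * L ^ β₁ * M ^ β₂| := by
        rw [← abs_of_pos hMβ, ← abs_mul, abs_of_pos hMβ, sub_mul]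
    _ ≤ |S * M ^ β₂ - T| + |T - C * L ^ β₁ * M ^ β₂| := abs_sub_le _ _ _
    _ ≤ K₂ * L ^ (1 + D) * M ^ (β₂ - δ) + K₁ * L ^ β₁ * M ^ β₂ * L ^ (-δ) :=
        add_le_add hrows hdouble
    _ = (K₁ * L ^ β₁ * L ^ (-δ) + K₂ * L ^ (1 + D) * M ^ (-δ)) * M ^ β₂ := by
        rw [sub_eq_add_neg, Real.rpow_add (by linarith : 0 < M) β₂]; ring

theorem coefficient_mean_values_general
    (h : ℕ → ℕ → ℝ)
    (C δ β₁ β₂ ν D : ℝ) (hδ : 0 < δ)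
    (hν : 0 < ν) (hD : 0 ≤ D)
    (c₁ c₂ : ℕ → ℝ)
    (hI : CondI h C δ β₁ β₂) (hII : CondII h δ β₁ β₂ ν D c₁ c₂) :
    (∃ K > (0 : ℝ), ∀ L : ℝ, 1 ≤ L →
      |(∑ l ∈ Finset.Icc 1 ⌊L⌋₊, c₂ l) - C * L ^ β₁| ≤ K * L ^ β₁ * L ^ (-δ)) ∧
    (∃ K > (0 : ℝ), ∀ M : ℝ, 1 ≤ M →
      |(∑ m ∈ Finset.Icc 1 ⌊M⌋₊, c₁ m) - C * M ^ β₂| ≤ K * M ^ β₂ * M ^ (-δ)) :=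
  ⟨hII.abs_sum_coeff₂_sub_le hδ hν hD hI, hII.swap.abs_sum_coeff₂_sub_le hδ hν hD hI.swap⟩

/-- **Lemma 9.2 (lem6a).** Mean values of the coefficient functions `c₁`, `c₂` from
condition (II). -/
theorem coefficient_mean_values
    (h : ℕ → ℕ → ℝ) (hpos : ∀ l m, 0 ≤ h l m)
    (C δ β₁ β₂ ν D : ℝ) (hδ : 0 < δ) (hβ₁ : 0 < β₁) (hβ₂ : 0 < β₂)
    (hν : 0 < ν) (hD : 0 ≤ D)
    (c₁ c₂ : ℕ → ℝ) (hc₁ : ∀ m, 0 ≤ c₁ m) (hc₂ : ∀ l, 0 ≤ c₂ l)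
    (hI : CondI h C δ β₁ β₂) (hII : CondII h δ β₁ β₂ ν D c₁ c₂) :
    (∃ K > (0 : ℝ), ∀ L : ℝ, 1 ≤ L →
      |(∑ l ∈ Finset.Icc 1 ⌊L⌋₊, c₂ l) - C * L ^ β₁| ≤ K * L ^ β₁ * L ^ (-δ)) ∧
    (∃ K > (0 : ℝ), ∀ M : ℝ, 1 ≤ M →
      |(∑ m ∈ Finset.Icc 1 ⌊M⌋₊, c₁ m) - C * M ^ β₂| ≤ K * M ^ β₂ * M ^ (-δ)) :=
  coefficient_mean_values_general h C δ β₁ β₂ ν D hδ hν hD c₁ c₂ hI hII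

end BiprojCM
end
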